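/- For each integer n ≥ 2 and each discrete function w : {1,…,n}² → ℝ (extended by 0 outside {1,…,n}²), let P_n(w) : ℝ² → ℝ be the piecewise constant function equal to w(i,j) on the cell R_{ij}ⁿ := ((i−1/2)/n, (i+1/2)/n) × ((j−1/2)/n, (j+1/2)/n) and 0 elsewhere, and define the upwind discrete total variation TVⁿ(w) := (1/n)·Σ_{(i,j)} ( (w(i+1,j)−w(i,j))₊² + (w(i−1,j)−w(i,j))₊² + (w(i,j+1)−w(i,j))₊² + (w(i,j−1)−w(i,j))₊² )^{1/2}, where t₊ := max(t,0). Then for every sequence of discrete functions wₙ : {1,…,n}² → ℝ and every v ∈ L¹(ℝ²) such that P_n(wₙ) → v in L¹((0,1)²), one has TV(v, (0,1)²) ≤ liminf_{n→∞} TVⁿ(wₙ). (Γ-liminf inequality for the upwind finite-difference discretization of the total variation.) -/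

import Mathlib

open MeasureTheory
open scoped ENNReal

noncomputable section

/-- The plane `ℝ²`. -/
abbrev E2 := EuclideanSpace ℝ (Fin 2)

/-- The divergence `∂₁p₁ + ∂₂p₂` of a vector field `p : ℝ² → ℝ²`. -/
def vdiv (p : E2 → E2) (x : E2) : ℝ :=
  ∑ i, fderiv ℝ p x (EuclideanSpace.single i 1) i

/-- The total variation `TV(v, A)` of `v` on `A`, defined by duality against `C¹`
compactly supported vector fields with values in the unit ball. -/
def TV (v : E2 → ℝ) (A : Set E2) : ℝ≥0∞ :=
  ⨆ p : {p : E2 → E2 //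
      ContDiff ℝ 1 p ∧ HasCompactSupport p ∧ tsupport p ⊆ A ∧ ∀ x, ‖p x‖ ≤ 1},
    ENNReal.ofReal (∫ x in A, v x * vdiv p.1 x)

/-- The open unit square `(0,1)²`. -/
def unitSq : Set E2 := {x | x 0 ∈ Set.Ioo (0 : ℝ) 1 ∧ x 1 ∈ Set.Ioo (0 : ℝ) 1}

/-- The piecewise constant interpolation of a discrete function `w : ℤ × ℤ → ℝ`: on the open
cell `R_{ij}ⁿ = ((i−1/2)/n, (i+1/2)/n) × ((j−1/2)/n, (j+1/2)/n)` it takes the value `w (i, j)`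
(the index of the cell containing `x` is recovered by rounding `n·x`). -/
def Pn (n : ℕ) (w : ℤ × ℤ → ℝ) (x : E2) : ℝ :=
  w (round ((n : ℝ) * x 0), round ((n : ℝ) * x 1))

/-- The positive part `t₊ = max(t,0)`. -/
def pos (t : ℝ) : ℝ := max t 0

/-- The upwind discrete total variation
`TVⁿ(w) = (1/n)·Σ_{(i,j)} ((w(i+1,j)−w(i,j))₊² + (w(i−1,j)−w(i,j))₊²
  + (w(i,j+1)−w(i,j))₊² + (w(i,j−1)−w(i,j))₊²)^{1/2}`
(the sum over the indices `0 ≤ i, j ≤ n+1` captures every nonzero term for discrete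
functions supported in the grid `{1,…,n}²`). -/
def TVn (n : ℕ) (w : ℤ × ℤ → ℝ) : ℝ :=
  (1 / (n : ℝ)) * ∑ i ∈ Finset.Icc (0 : ℤ) ((n : ℤ) + 1), ∑ j ∈ Finset.Icc (0 : ℤ) ((n : ℤ) + 1),
    Real.sqrt (pos (w (i + 1, j) - w (i, j)) ^ 2 + pos (w (i - 1, j) - w (i, j)) ^ 2 +
      pos (w (i, j + 1) - w (i, j)) ^ 2 + pos (w (i, j - 1) - w (i, j)) ^ 2)

/-!
Fix an admissible field `p` with Lipschitz constant `K`. Since `Pₙ w` is constant on cells, the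
divergence theorem on each cell turns `∫ Pₙ w · div p` into `Σ w(i,j)` times the net outward flux
of `p` across the cell; summation by parts moves the differences onto `w`, and splitting each
product `(w_q - w_{q+e}) · flux` by signs (upwinding) bounds the result by the sum over cells of
`Σ_{±e} (w_{q±e} - w_q)₊ · (inflow into q across its edge shared with q±e)₊`. The four inflows
are at most `(1/n) · ((-p₁ c)₊ + K/n, (p₁ c)₊ + K/n, (-p₂ c)₊ + K/n, (p₂ c)₊ + K/n)`, with `c` the
cell centre and `|p c| ≤ 1`, so Cauchy–Schwarz gives `∫ Pₙ w · div p ≤ (1 + 2K/n) TVⁿ(w)`. The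
left side converges by `L¹` convergence and the factor tends to `1`; take the supremum over `p`.
-/

namespace UpwindTV

open Filter Topology Set

section Plane

def planeEquiv : (ℝ × ℝ) ≃L[ℝ] E2 :=
  (ContinuousLinearEquiv.finTwoArrow ℝ ℝ).symm.trans (EuclideanSpace.equiv (Fin 2) ℝ).symm

@[simp] lemma planeEquiv_apply_zero (z : ℝ × ℝ) : planeEquiv z 0 = z.1 := rfl

@[simp] lemma planeEquiv_apply_one (z : ℝ × ℝ) : planeEquiv z 1 = z.2 := rfl

lemma planeEquiv_one_zero : planeEquiv (1, 0) = EuclideanSpace.single 0 1 := by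
  ext i; fin_cases i <;> simp

lemma planeEquiv_zero_one : planeEquiv (0, 1) = EuclideanSpace.single 1 1 := by
  ext i; fin_cases i <;> simp

lemma measurePreserving_planeEquiv : MeasurePreserving planeEquiv :=
  (PiLp.volume_preserving_toLp (Fin 2)).comp (volume_preserving_finTwoArrow ℝ).symm

lemma measurableEmbedding_planeEquiv : MeasurableEmbedding planeEquiv :=
  planeEquiv.toHomeomorph.measurableEmbedding

lemma dist_planeEquiv_le {z z' : ℝ × ℝ} {r : ℝ} (h₁ : |z.1 - z'.1| ≤ r)
    (h₂ : |z.2 - z'.2| ≤ r) : dist (planeEquiv z) (planeEquiv z') ≤ 2 * r := by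
  have hr : 0 ≤ r := (abs_nonneg _).trans h₁
  rw [EuclideanSpace.dist_eq, Fin.sum_univ_two, Real.sqrt_le_left (by positivity)]
  simp only [planeEquiv_apply_zero, planeEquiv_apply_one, Real.dist_eq, sq_abs]
  nlinarith [sq_abs (z.1 - z'.1), sq_abs (z.2 - z'.2), abs_nonneg (z.1 - z'.1),
    abs_nonneg (z.2 - z'.2)]

end Plane

section Cells

variable {n : ℕ}

def cellEdge (n : ℕ) (i : ℤ) : ℝ := (i - 1 / 2) / n

def cellIndex (n : ℕ) (x : E2) : ℤ × ℤ := (round (n * x 0), round (n * x 1))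

def cell (n : ℕ) (q : ℤ × ℤ) : Set E2 := cellIndex n ⁻¹' {q}

def cellCenter (n : ℕ) (q : ℤ × ℤ) : E2 := planeEquiv (q.1 / n, q.2 / n)

lemma round_mul_eq_iff (hn : 0 < n) {t : ℝ} {i : ℤ} :
    round (n * t) = i ↔ t ∈ Ico (cellEdge n i) (cellEdge n (i + 1)) := by
  have hn' : (0 : ℝ) < n := Nat.cast_pos.2 hn
  rw [round_eq_iff, mem_Ico, mem_Ico, cellEdge, cellEdge, div_le_iff₀ hn', lt_div_iff₀ hn']
  push_cast
  constructor <;> rintro ⟨h₁, h₂⟩ <;> constructor <;> linarith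

lemma cellEdge_le_succ (i : ℤ) : cellEdge n i ≤ cellEdge n (i + 1) := by
  unfold cellEdge; gcongr; simp

lemma cellEdge_succ_sub (i : ℤ) : cellEdge n (i + 1) - cellEdge n i = 1 / n := by
  unfold cellEdge; push_cast; ring

lemma abs_sub_div_le_of_mem_Icc {i : ℤ} {t : ℝ}
    (ht : t ∈ Icc (cellEdge n i) (cellEdge n (i + 1))) : |t - i / n| ≤ 1 / (2 * n) := by
  have hedge : ∀ k : ℤ, cellEdge n k = k / n - 1 / (2 * n) := fun k => by
    unfold cellEdge; ring
  have hsucc : ((i + 1 : ℤ) : ℝ) / n = i / n + 2 * (1 / (2 * n)) := by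
    push_cast; field_simp
  obtain ⟨h₁, h₂⟩ := ht
  rw [hedge] at h₁ h₂
  rw [hsucc] at h₂
  rw [abs_le]
  constructor <;> linarith

lemma dist_cellCenter_le {q : ℤ × ℤ} {s t : ℝ}
    (hs : s ∈ Icc (cellEdge n q.1) (cellEdge n (q.1 + 1)))
    (ht : t ∈ Icc (cellEdge n q.2) (cellEdge n (q.2 + 1))) :
    dist (planeEquiv (s, t)) (cellCenter n q) ≤ 1 / n := by
  have := dist_planeEquiv_le (z := (s, t)) (z' := (q.1 / n, q.2 / n))
    (abs_sub_div_le_of_mem_Icc hs) (abs_sub_div_le_of_mem_Icc ht)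
  exact this.trans_eq (by ring)

lemma planeEquiv_preimage_cell (hn : 0 < n) (q : ℤ × ℤ) :
    planeEquiv ⁻¹' cell n q = Ico (cellEdge n q.1) (cellEdge n (q.1 + 1)) ×ˢ
      Ico (cellEdge n q.2) (cellEdge n (q.2 + 1)) := by
  ext z
  simp [cell, cellIndex, Prod.ext_iff, round_mul_eq_iff hn]

lemma measurableSet_cell (hn : 0 < n) (q : ℤ × ℤ) : MeasurableSet (cell n q) := by
  rw [← planeEquiv.toHomeomorph.toMeasurableEquiv.measurableSet_preimage]
  exact (planeEquiv_preimage_cell hn q ▸ measurableSet_Ico.prod measurableSet_Ico :)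

lemma volume_cell_lt_top (hn : 0 < n) (q : ℤ × ℤ) : volume (cell n q) < ⊤ := by
  rw [← measurePreserving_planeEquiv.measure_preimage (measurableSet_cell hn q).nullMeasurableSet,
    planeEquiv_preimage_cell hn]
  exact (Metric.isBounded_Ico _ _ |>.prod (Metric.isBounded_Ico _ _)).measure_lt_top

end Cells

def SupportedInGrid (n : ℕ) (w : ℤ × ℤ → ℝ) : Prop :=
  ∀ q : ℤ × ℤ, ¬(1 ≤ q.1 ∧ q.1 ≤ (n : ℤ) ∧ 1 ≤ q.2 ∧ q.2 ≤ (n : ℤ)) → w q = 0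

def gridBox (n : ℕ) : Finset (ℤ × ℤ) := Finset.Icc 0 ((n : ℤ) + 1) ×ˢ Finset.Icc 0 ((n : ℤ) + 1)

section Interpolation

variable {n : ℕ} {w : ℤ × ℤ → ℝ}

lemma Pn_mul_eq_sum (hw : SupportedInGrid n w) (f : E2 → ℝ) (x : E2) :
    Pn n w x * f x = ∑ q ∈ gridBox n, w q * (cell n q).indicator f x := by
  have hcell : ∀ q, x ∈ cell n q ↔ cellIndex n x = q := fun q => Iff.rfl
  rw [Finset.sum_eq_single (cellIndex n x)]
  · rw [indicator_of_mem ((hcell _).2 rfl)]; rfl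
  · intro q _ hq
    rw [indicator_of_notMem fun h => hq ((hcell q).1 h).symm, mul_zero]
  · intro hx
    rw [hw _ fun h => hx ?_, zero_mul]
    simp only [gridBox, Finset.mem_product, Finset.mem_Icc]
    omega

lemma integrable_Pn (hn : 0 < n) (hw : SupportedInGrid n w) : Integrable (Pn n w) := by
  have h : Pn n w = fun x => ∑ q ∈ gridBox n, w q * (cell n q).indicator 1 x := by
    ext x; simpa using Pn_mul_eq_sum hw 1 x
  rw [h]
  refine integrable_finsetSum _ fun q _ => Integrable.const_mul ?_ _
  rw [integrable_indicator_iff (measurableSet_cell hn q)]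
  exact integrableOn_const (volume_cell_lt_top hn q).ne

end Interpolation

section Divergence

variable {p : E2 → E2}

lemma continuous_vdiv (hp : ContDiff ℝ 1 p) : Continuous (vdiv p) :=
  continuous_finsetSum _ fun i _ => (EuclideanSpace.proj i).continuous.comp
    ((hp.continuous_fderiv one_ne_zero).clm_apply continuous_const)

lemma hasCompactSupport_vdiv (hp : HasCompactSupport p) : HasCompactSupport (vdiv p) :=
  (hp.fderiv ℝ).comp_left (g := fun L : E2 →L[ℝ] E2 => ∑ i, L (EuclideanSpace.single i 1) i)
    (by simp)

lemma vdiv_eq_zero_of_notMem_tsupport {x : E2} (hx : x ∉ tsupport p) : vdiv p x = 0 := by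
  have : fderiv ℝ p x = 0 := Function.notMem_support.1 fun h => hx (support_fderiv_subset ℝ h)
  simp [vdiv, this]

lemma setIntegral_Pn_mul_vdiv (hp : ContDiff ℝ 1 p) (hcs : HasCompactSupport p)
    (hsub : tsupport p ⊆ unitSq) {n : ℕ} (hn : 0 < n) {w : ℤ × ℤ → ℝ}
    (hw : SupportedInGrid n w) :
    ∫ x in unitSq, Pn n w x * vdiv p x = ∑ q ∈ gridBox n, w q * ∫ x in cell n q, vdiv p x := by
  have hint : Integrable (vdiv p) := (continuous_vdiv hp).integrable_of_hasCompactSupport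
    (hasCompactSupport_vdiv hcs)
  rw [setIntegral_eq_integral_of_forall_compl_eq_zero fun x hx => by
      rw [vdiv_eq_zero_of_notMem_tsupport fun h => hx (hsub h), mul_zero],
    funext (Pn_mul_eq_sum hw (vdiv p)),
    integral_finsetSum _ fun q _ => (hint.indicator (measurableSet_cell hn q)).const_mul _]
  simp only [integral_const_mul, integral_indicator (measurableSet_cell hn _)]

lemma hasFDerivAt_apply_planeEquiv (hp : Differentiable ℝ p) (k : Fin 2) (z : ℝ × ℝ) :
    HasFDerivAt (fun z => p (planeEquiv z) k)
      ((EuclideanSpace.proj k).comp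
        ((fderiv ℝ p (planeEquiv z)).comp (planeEquiv : (ℝ × ℝ) →L[ℝ] E2))) z := by
  exact (EuclideanSpace.proj k).hasFDerivAt.comp z
    ((hp _).hasFDerivAt.comp z planeEquiv.hasFDerivAt)

lemma fderiv_planeEquiv_add_eq_vdiv (p : E2 → E2) (z : ℝ × ℝ) :
    fderiv ℝ p (planeEquiv z) (planeEquiv (1, 0)) 0 +
      fderiv ℝ p (planeEquiv z) (planeEquiv (0, 1)) 1 = vdiv p (planeEquiv z) := by
  rw [planeEquiv_one_zero, planeEquiv_zero_one, vdiv, Fin.sum_univ_two]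

-- Fluxes of `p` through the right and the top edge of the cell `(i, j)`.
def fluxX (p : E2 → E2) (n : ℕ) (i j : ℤ) : ℝ :=
  ∫ t in cellEdge n j..cellEdge n (j + 1), p (planeEquiv (cellEdge n (i + 1), t)) 0

def fluxY (p : E2 → E2) (n : ℕ) (i j : ℤ) : ℝ :=
  ∫ s in cellEdge n i..cellEdge n (i + 1), p (planeEquiv (s, cellEdge n (j + 1))) 1

lemma integral_cell_vdiv (hp : ContDiff ℝ 1 p) {n : ℕ} (hn : 0 < n) (i j : ℤ) :
    ∫ x in cell n (i, j), vdiv p x =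
      (fluxX p n i j - fluxX p n (i - 1) j) + (fluxY p n i j - fluxY p n i (j - 1)) := by
  have hd := hp.differentiable one_ne_zero
  have hc := hp.continuous
  have key := integral_divergence_prod_Icc_of_hasFDerivAt_off_countable_of_le
    (fun z => p (planeEquiv z) 0) (fun z => p (planeEquiv z) 1) _ _
    (cellEdge n i, cellEdge n j) (cellEdge n (i + 1), cellEdge n (j + 1))
    ⟨cellEdge_le_succ i, cellEdge_le_succ j⟩ ∅ countable_empty
    (by fun_prop) (by fun_prop)
    (fun z _ => hasFDerivAt_apply_planeEquiv hd 0 z)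
    (fun z _ => hasFDerivAt_apply_planeEquiv hd 1 z)
    (by
      simp only [ContinuousLinearMap.comp_apply, PiLp.proj_apply, ContinuousLinearEquiv.coe_coe,
        fderiv_planeEquiv_add_eq_vdiv]
      exact ((continuous_vdiv hp).comp planeEquiv.continuous).integrableOn_Icc (μ := volume))
  simp only [ContinuousLinearMap.comp_apply, PiLp.proj_apply, ContinuousLinearEquiv.coe_coe,
    fderiv_planeEquiv_add_eq_vdiv] at key
  rw [← measurePreserving_planeEquiv.setIntegral_preimage_emb measurableEmbedding_planeEquiv,
    planeEquiv_preimage_cell hn, Measure.volume_eq_prod,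
    setIntegral_congr_set (Measure.set_prod_ae_eq Ico_ae_eq_Icc Ico_ae_eq_Icc), Icc_prod_Icc,
    ← Measure.volume_eq_prod, key, fluxX, fluxX, fluxY, fluxY, sub_add_cancel, sub_add_cancel]
  ring

end Divergence

section Summation

lemma mul_le_pos_mul_pos_add (a b : ℝ) : a * b ≤ pos a * pos b + pos (-a) * pos (-b) := by
  unfold pos
  rcases le_total a 0 with ha | ha <;> rcases le_total b 0 with hb | hb <;>
    simp [ha, hb] <;> nlinarith

lemma sum_Icc_comp_sub_one {H : ℤ → ℝ} {a b : ℤ} (hab : a ≤ b) (ha : H (a - 1) = 0)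
    (hb : H b = 0) : ∑ i ∈ Finset.Icc a b, H (i - 1) = ∑ i ∈ Finset.Icc a b, H i := by
  have hshift : ∑ i ∈ Finset.Icc a b, H (i - 1) = ∑ i ∈ Finset.Icc (a - 1) (b - 1), H i :=
    Finset.sum_nbij' (· - 1) (· + 1) (by simp) (by simp) (by simp) (by simp) (by simp)
  have hlow : Finset.Icc (a - 1) (b - 1) = insert (a - 1) (Finset.Icc a (b - 1)) := by
    ext; simp; omega
  have hhigh : Finset.Icc a b = insert b (Finset.Icc a (b - 1)) := by
    ext; simp; omega
  rw [hshift, hlow, hhigh, Finset.sum_insert (by simp), Finset.sum_insert (by simp), ha, hb]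

variable {n : ℕ} {u : ℤ → ℝ}

lemma sum_mul_sub_eq (hu : ∀ k, k ≤ 0 ∨ (n : ℤ) < k → u k = 0) (X : ℤ → ℝ) :
    ∑ i ∈ Finset.Icc (0 : ℤ) (n + 1), u i * (X i - X (i - 1)) =
      ∑ i ∈ Finset.Icc (0 : ℤ) (n + 1), (u i - u (i + 1)) * X i := by
  have h := sum_Icc_comp_sub_one (H := fun k => u (k + 1) * X k) (a := 0) (b := n + 1)
    (by omega) (by simp [hu 0]) (by simp [hu (n + 1 + 1) (by omega)])
  simp only [sub_add_cancel] at h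
  simp only [mul_sub, sub_mul, Finset.sum_sub_distrib, h]

lemma sum_mul_sub_le_upwind (hu : ∀ k, k ≤ 0 ∨ (n : ℤ) < k → u k = 0) (X : ℤ → ℝ) :
    ∑ i ∈ Finset.Icc (0 : ℤ) (n + 1), u i * (X i - X (i - 1)) ≤
      ∑ i ∈ Finset.Icc (0 : ℤ) (n + 1),
        (pos (u (i + 1) - u i) * pos (-X i) + pos (u (i - 1) - u i) * pos (X (i - 1))) := by
  have h := sum_Icc_comp_sub_one (H := fun k => pos (u k - u (k + 1)) * pos (X k))
    (a := 0) (b := n + 1) (by omega) (by simp [hu 0, hu (-1) (by omega), pos])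
    (by simp [hu (n + 1) (by omega), hu (n + 1 + 1) (by omega), pos])
  simp only [sub_add_cancel] at h
  rw [sum_mul_sub_eq hu, Finset.sum_add_distrib, h, add_comm, ← Finset.sum_add_distrib]
  refine Finset.sum_le_sum fun i _ => ?_
  simpa [add_comm] using mul_le_pos_mul_pos_add (u i - u (i + 1)) (X i)

lemma sum_mul_discreteDiv_le_upwind {w : ℤ × ℤ → ℝ} (hw : SupportedInGrid n w) (X Y : ℤ → ℤ → ℝ) :
    ∑ i ∈ Finset.Icc (0 : ℤ) (n + 1), ∑ j ∈ Finset.Icc (0 : ℤ) (n + 1),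
        w (i, j) * ((X i j - X (i - 1) j) + (Y i j - Y i (j - 1))) ≤
      ∑ i ∈ Finset.Icc (0 : ℤ) (n + 1), ∑ j ∈ Finset.Icc (0 : ℤ) (n + 1),
        (pos (w (i + 1, j) - w (i, j)) * pos (-X i j) +
          pos (w (i - 1, j) - w (i, j)) * pos (X (i - 1) j) +
          pos (w (i, j + 1) - w (i, j)) * pos (-Y i j) +
          pos (w (i, j - 1) - w (i, j)) * pos (Y i (j - 1))) := by
  have hrow (j : ℤ) := sum_mul_sub_le_upwind (n := n) (u := fun i => w (i, j))
    (fun k hk => hw _ (by simp only; omega)) (X · j)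
  have hcol (i : ℤ) := sum_mul_sub_le_upwind (n := n) (u := fun j => w (i, j))
    (fun k hk => hw _ (by simp only; omega)) (Y i)
  calc _ = ∑ j ∈ Finset.Icc (0 : ℤ) (n + 1), ∑ i ∈ Finset.Icc (0 : ℤ) (n + 1),
          w (i, j) * (X i j - X (i - 1) j) +
        ∑ i ∈ Finset.Icc (0 : ℤ) (n + 1), ∑ j ∈ Finset.Icc (0 : ℤ) (n + 1),
          w (i, j) * (Y i j - Y i (j - 1)) := by
        simp only [mul_add, Finset.sum_add_distrib]
        rw [Finset.sum_comm]
    _ ≤ _ := add_le_add (Finset.sum_le_sum fun j _ => hrow j)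
        (Finset.sum_le_sum fun i _ => hcol i)
    _ = _ := by
        rw [Finset.sum_comm]
        simp only [← Finset.sum_add_distrib, add_assoc]

end Summation

section CellEstimate

lemma pos_nonneg (t : ℝ) : 0 ≤ pos t := le_max_right t 0

lemma pos_sq_add_pos_neg_sq (t : ℝ) : pos t ^ 2 + pos (-t) ^ 2 = t ^ 2 := by
  unfold pos
  rcases le_total t 0 with ht | ht <;> simp [ht]

lemma le_pos_add_of_abs_sub_le {a b ε : ℝ} (h : |a - b| ≤ ε) : a ≤ pos b + ε := by
  unfold pos; linarith [le_max_left b 0, le_abs_self (a - b)]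

lemma pos_intervalIntegral_le {φ : ℝ → ℝ} {a b M : ℝ} (hφ : IntervalIntegrable φ volume a b)
    (hab : a ≤ b) (hM : 0 ≤ M) (hφM : ∀ t ∈ Icc a b, φ t ≤ M) :
    pos (∫ t in a..b, φ t) ≤ (b - a) * M := by
  refine max_le ?_ (mul_nonneg (sub_nonneg.2 hab) hM)
  simpa [mul_comm] using intervalIntegral.integral_mono_on hab hφ intervalIntegrable_const hφM

lemma add_four_mul_le_sqrt_mul_sqrt (a₁ a₂ a₃ a₄ b₁ b₂ b₃ b₄ : ℝ) :
    a₁ * b₁ + a₂ * b₂ + a₃ * b₃ + a₄ * b₄ ≤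
      √(a₁ ^ 2 + a₂ ^ 2 + a₃ ^ 2 + a₄ ^ 2) * √(b₁ ^ 2 + b₂ ^ 2 + b₃ ^ 2 + b₄ ^ 2) := by
  simpa [Fin.sum_univ_four, add_assoc] using
    Real.sum_mul_le_sqrt_mul_sqrt Finset.univ ![a₁, a₂, a₃, a₄] ![b₁, b₂, b₃, b₄]

/-- Cauchy–Schwarz twice: against `((-s₁)₊, s₁₊, (-s₂)₊, s₂₊)`, whose norm is `|s| ≤ 1`, and
against `(1, 1, 1, 1)`, whose norm is `2`. -/
lemma sum_four_mul_le_of_le_pos_add {a₁ a₂ a₃ a₄ b₁ b₂ b₃ b₄ s₁ s₂ h ε : ℝ} (ha₁ : 0 ≤ a₁) (ha₂ : 0 ≤ a₂)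
    (ha₃ : 0 ≤ a₃) (ha₄ : 0 ≤ a₄) (hh : 0 ≤ h) (hε : 0 ≤ ε) (hs : s₁ ^ 2 + s₂ ^ 2 ≤ 1)
    (hb₁ : b₁ ≤ h * (pos (-s₁) + ε)) (hb₂ : b₂ ≤ h * (pos s₁ + ε))
    (hb₃ : b₃ ≤ h * (pos (-s₂) + ε)) (hb₄ : b₄ ≤ h * (pos s₂ + ε)) :
    a₁ * b₁ + a₂ * b₂ + a₃ * b₃ + a₄ * b₄ ≤
      (1 + 2 * ε) * (h * √(a₁ ^ 2 + a₂ ^ 2 + a₃ ^ 2 + a₄ ^ 2)) := by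
  set A := √(a₁ ^ 2 + a₂ ^ 2 + a₃ ^ 2 + a₄ ^ 2)
  have hA : 0 ≤ A := Real.sqrt_nonneg _
  have hq : a₁ * pos (-s₁) + a₂ * pos s₁ + a₃ * pos (-s₂) + a₄ * pos s₂ ≤ A := by
    refine (add_four_mul_le_sqrt_mul_sqrt _ _ _ _ _ _ _ _).trans
      (mul_le_of_le_one_right hA (Real.sqrt_le_one.2 ?_))
    linarith [pos_sq_add_pos_neg_sq s₁, pos_sq_add_pos_neg_sq s₂]
  have hone : a₁ + a₂ + a₃ + a₄ ≤ A * 2 := by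
    have h4 : √(1 + 1 + 1 + 1 : ℝ) = 2 := by
      rw [Real.sqrt_eq_iff_mul_self_eq] <;> norm_num
    simpa [h4] using add_four_mul_le_sqrt_mul_sqrt a₁ a₂ a₃ a₄ 1 1 1 1
  calc a₁ * b₁ + a₂ * b₂ + a₃ * b₃ + a₄ * b₄
      ≤ a₁ * (h * (pos (-s₁) + ε)) + a₂ * (h * (pos s₁ + ε)) + a₃ * (h * (pos (-s₂) + ε)) +
          a₄ * (h * (pos s₂ + ε)) := by gcongr
    _ = h * ((a₁ * pos (-s₁) + a₂ * pos s₁ + a₃ * pos (-s₂) + a₄ * pos s₂) +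
          ε * (a₁ + a₂ + a₃ + a₄)) := by ring
    _ ≤ h * (A + ε * (A * 2)) := by gcongr
    _ = (1 + 2 * ε) * (h * A) := by ring

variable {p : E2 → E2} {K : NNReal} {n : ℕ}

lemma abs_apply_sub_cellCenter_le (hK : LipschitzWith K p) {i j : ℤ} {s t : ℝ}
    (hs : s ∈ Icc (cellEdge n i) (cellEdge n (i + 1)))
    (ht : t ∈ Icc (cellEdge n j) (cellEdge n (j + 1))) (k : Fin 2) :
    |p (planeEquiv (s, t)) k - p (cellCenter n (i, j)) k| ≤ K / n :=
  calc |p (planeEquiv (s, t)) k - p (cellCenter n (i, j)) k|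
      ≤ ‖p (planeEquiv (s, t)) - p (cellCenter n (i, j))‖ :=
        PiLp.norm_apply_le (p (planeEquiv (s, t)) - p (cellCenter n (i, j))) k
    _ ≤ K * dist (planeEquiv (s, t)) (cellCenter n (i, j)) :=
        (dist_eq_norm _ _).symm.trans_le (hK.dist_le_mul _ _)
    _ ≤ K * (1 / n) := by gcongr; exact dist_cellCenter_le (q := (i, j)) hs ht
    _ = K / n := by ring

lemma upwind_cell_le (hK : LipschitzWith K p) (hp : ∀ x, ‖p x‖ ≤ 1) (i j : ℤ)
    {a₁ a₂ a₃ a₄ : ℝ} (ha₁ : 0 ≤ a₁) (ha₂ : 0 ≤ a₂) (ha₃ : 0 ≤ a₃) (ha₄ : 0 ≤ a₄) :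
    a₁ * pos (-fluxX p n i j) + a₂ * pos (fluxX p n (i - 1) j) +
        a₃ * pos (-fluxY p n i j) + a₄ * pos (fluxY p n i (j - 1)) ≤
      (1 + 2 * (K / n)) * (1 / n * √(a₁ ^ 2 + a₂ ^ 2 + a₃ ^ 2 + a₄ ^ 2)) := by
  have hc := hK.continuous
  set c := cellCenter n (i, j)
  have hlo (k : ℤ) : cellEdge n k ∈ Icc (cellEdge n k) (cellEdge n (k + 1)) :=
    left_mem_Icc.2 (cellEdge_le_succ k)
  have hhi (k : ℤ) : cellEdge n (k + 1) ∈ Icc (cellEdge n k) (cellEdge n (k + 1)) :=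
    right_mem_Icc.2 (cellEdge_le_succ k)
  have hneg {a b : ℝ} (h : |a - b| ≤ K / n) : -a ≤ pos (-b) + K / n :=
    le_pos_add_of_abs_sub_le (by rwa [neg_sub_neg, abs_sub_comm])
  have hM (σ : ℝ) : 0 ≤ pos σ + K / n := add_nonneg (pos_nonneg σ) (by positivity)
  refine sum_four_mul_le_of_le_pos_add ha₁ ha₂ ha₃ ha₄ (by positivity) (by positivity)
    (s₁ := p c 0) (s₂ := p c 1) ?_ ?_ ?_ ?_ ?_
  · simpa [EuclideanSpace.real_norm_sq_eq, Fin.sum_univ_two] using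
      pow_le_one₀ (n := 2) (norm_nonneg _) (hp c)
  · rw [fluxX, ← intervalIntegral.integral_neg, ← cellEdge_succ_sub j]
    exact pos_intervalIntegral_le ((by fun_prop : Continuous _).intervalIntegrable _ _)
      (cellEdge_le_succ j) (hM _)
      fun t ht => hneg (abs_apply_sub_cellCenter_le hK (hhi i) ht 0)
  · rw [fluxX, sub_add_cancel, ← cellEdge_succ_sub j]
    exact pos_intervalIntegral_le ((by fun_prop : Continuous _).intervalIntegrable _ _)
      (cellEdge_le_succ j) (hM _)
      fun t ht => le_pos_add_of_abs_sub_le (abs_apply_sub_cellCenter_le hK (hlo i) ht 0)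
  · rw [fluxY, ← intervalIntegral.integral_neg, ← cellEdge_succ_sub i]
    exact pos_intervalIntegral_le ((by fun_prop : Continuous _).intervalIntegrable _ _)
      (cellEdge_le_succ i) (hM _)
      fun s hs => hneg (abs_apply_sub_cellCenter_le hK hs (hhi j) 1)
  · rw [fluxY, sub_add_cancel, ← cellEdge_succ_sub i]
    exact pos_intervalIntegral_le ((by fun_prop : Continuous _).intervalIntegrable _ _)
      (cellEdge_le_succ i) (hM _)
      fun s hs => le_pos_add_of_abs_sub_le (abs_apply_sub_cellCenter_le hK hs (hlo j) 1)

end CellEstimate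

lemma setIntegral_Pn_mul_vdiv_le {p : E2 → E2} {K : NNReal} (hp : ContDiff ℝ 1 p)
    (hcs : HasCompactSupport p) (hsub : tsupport p ⊆ unitSq) (hle : ∀ x, ‖p x‖ ≤ 1)
    (hK : LipschitzWith K p) {n : ℕ} (hn : 0 < n) {w : ℤ × ℤ → ℝ} (hw : SupportedInGrid n w) :
    ∫ x in unitSq, Pn n w x * vdiv p x ≤ (1 + 2 * (K / n)) * TVn n w := by
  rw [setIntegral_Pn_mul_vdiv hp hcs hsub hn hw, gridBox, Finset.sum_product]
  simp only [integral_cell_vdiv hp hn]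
  refine (sum_mul_discreteDiv_le_upwind hw (fluxX p n) (fluxY p n)).trans ?_
  refine (Finset.sum_le_sum fun i _ => Finset.sum_le_sum fun j _ => upwind_cell_le hK hle i j
    (pos_nonneg _) (pos_nonneg _) (pos_nonneg _) (pos_nonneg _)).trans_eq ?_
  simp only [TVn, Finset.mul_sum]

lemma tendsto_integral_mul_of_tendsto_integral_abs_sub {α ι : Type*} [MeasurableSpace α]
    {μ : Measure α} {l : Filter ι} {f : ι → α → ℝ} {g φ : α → ℝ} {M : ℝ}
    (hf : ∀ᶠ i in l, Integrable (f i) μ) (hg : Integrable g μ) (hφ : AEStronglyMeasurable φ μ)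
    (hφM : ∀ᵐ x ∂μ, ‖φ x‖ ≤ M) (h : Tendsto (fun i => ∫ x, |f i x - g x| ∂μ) l (𝓝 0)) :
    Tendsto (fun i => ∫ x, f i x * φ x ∂μ) l (𝓝 (∫ x, g x * φ x ∂μ)) := by
  rw [tendsto_iff_norm_sub_tendsto_zero]
  refine squeeze_zero' (Eventually.of_forall fun _ => norm_nonneg _) ?_
    (by simpa using h.const_mul M)
  filter_upwards [hf] with i hfi
  rw [← integral_sub (hfi.mul_bdd hφ hφM) (hg.mul_bdd hφ hφM), ← integral_const_mul]
  refine norm_integral_le_of_norm_le ((hfi.sub hg).abs.const_mul M) ?_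
  filter_upwards [hφM] with x hx
  rw [← sub_mul, norm_mul, Real.norm_eq_abs, mul_comm]
  exact mul_le_mul_of_nonneg_right hx (abs_nonneg _)

end UpwindTV

open Filter Topology UpwindTV

/-- Γ-liminf inequality for the upwind finite-difference discretization of the
total variation: if the piecewise constant interpolations `Pn n (w n)` converge to `v` in
`L¹((0,1)²)`, then `TV(v, (0,1)²) ≤ liminf TVⁿ(wₙ)`. -/
theorem stmt_14 (w : ℕ → ℤ × ℤ → ℝ)
    (hsupp : ∀ n : ℕ, 2 ≤ n → ∀ q : ℤ × ℤ,
      ¬(1 ≤ q.1 ∧ q.1 ≤ (n : ℤ) ∧ 1 ≤ q.2 ∧ q.2 ≤ (n : ℤ)) → w n q = 0)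
    (v : E2 → ℝ) (hv : Integrable v)
    (hconv : Filter.Tendsto (fun n => ∫ x in unitSq, |Pn n (w n) x - v x|)
      Filter.atTop (nhds 0)) :
    TV v unitSq ≤ Filter.liminf (fun n => ENNReal.ofReal (TVn n (w n))) Filter.atTop := by
  refine iSup_le fun ⟨p, hp, hcs, hsub, hle⟩ => ?_
  obtain ⟨K, hK⟩ := ContDiff.lipschitzWith_of_hasCompactSupport hcs hp one_ne_zero
  obtain ⟨M, hM⟩ := (continuous_vdiv hp).bounded_above_of_compact_support
    (hasCompactSupport_vdiv hcs)
  have hlim := tendsto_integral_mul_of_tendsto_integral_abs_sub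
    ((eventually_ge_atTop 2).mono fun n hn => (integrable_Pn (by omega) (hsupp n hn)).restrict)
    hv.restrict (continuous_vdiv hp).aestronglyMeasurable (ae_of_all _ hM) hconv
  have hfactor : Tendsto (fun n : ℕ => 1 + 2 * (K / n : ℝ)) atTop (𝓝 1) := by
    simpa using ((tendsto_const_div_atTop_nhds_zero_nat (K : ℝ)).const_mul 2).const_add 1
  have hscaled := (ENNReal.continuous_ofReal.tendsto _).comp (hlim.div hfactor one_ne_zero)
  rw [div_one] at hscaled
  refine hscaled.liminf_eq.symm.trans_le (liminf_le_liminf ?_)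
  filter_upwards [eventually_ge_atTop 2] with n hn
  refine ENNReal.ofReal_le_ofReal ((div_le_iff₀ (by positivity)).2 ?_)
  exact (setIntegral_Pn_mul_vdiv_le hp hcs hsub hle hK (by omega) (hsupp n hn)).trans_eq
    (mul_comm _ _)

end
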